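/- Let X be a complete metric space, λ > 0, and ℓ : X → [0,∞) a bounded lsc function with inf_X ℓ = 0. If u, v : X → ℝ are bounded lsc functions with inf_X u = inf_X v = 0 satisfying λ u + G[u] ≤ ℓ and λ v + G[v] ≥ ℓ pointwise, then u ≤ v on X. In particular the equation λ w + G[w] = ℓ with inf w = 0 has a unique bounded Lipschitz solution. -/

import Mathlib

open Filter Topology ENNReal

/-- The global slope of a real-valued function `u` on a metric space:
`G[u](x) = sup_{y ≠ x} (u x - u y)⁺ / d(x,y)`, with values in `[0, ∞]`. -/
noncomputable def gslope {X : Type*} [MetricSpace X] (u : X → ℝ) (x : X) : ℝ≥0∞ :=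
  ⨆ (y : X) (_ : y ≠ x), ENNReal.ofReal ((u x - u y) / dist x y)

/-!
Comparison: a subsolution `u` that is bounded below is Lipschitz, since `G[u] ≤ ℓ - λ u`.
Ekeland's principle, applied to the lower semicontinuous function `v - u` with slope `δ`, gives
a point `x₀` at which `v - u` is smaller than at any prescribed point and where `v` inherits the
slope bound `ℓ - λ u + δ`; the supersolution inequality at `x₀` then yields `λ (u - v) ≤ δ`.

Existence is Perron's method: the supremum of all subsolutions is a subsolution, and if it
violated the supersolution inequality at some point, adding a small cone there would produce a
larger subsolution. Uniqueness is comparison applied in both directions.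
-/

open Set

theorem coe_add_ennreal_le_coe_iff {a b : ℝ} {g : ℝ≥0∞} :
    (a : EReal) + g ≤ b ↔ a ≤ b ∧ g ≤ ENNReal.ofReal (b - a) := by
  rcases eq_or_ne g ⊤ with rfl | hg
  · simp [EReal.add_top_of_ne_bot]
  rw [← EReal.coe_ennreal_toReal hg, ← EReal.coe_add, EReal.coe_le_coe_iff]
  constructor
  · intro h
    have ha : a ≤ b := by linarith [g.toReal_nonneg]
    exact ⟨ha, (ENNReal.le_ofReal_iff_toReal_le hg (sub_nonneg.2 ha)).2 (by linarith)⟩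
  · rintro ⟨ha, h⟩
    linarith [(ENNReal.le_ofReal_iff_toReal_le hg (sub_nonneg.2 ha)).1 h]

theorem coe_le_coe_add_ennreal_iff {a b : ℝ} {g : ℝ≥0∞} :
    (b : EReal) ≤ a + g ↔ ENNReal.ofReal (b - a) ≤ g := by
  rcases eq_or_ne g ⊤ with rfl | hg
  · simp [EReal.add_top_of_ne_bot]
  rw [← EReal.coe_ennreal_toReal hg, ← EReal.coe_add, EReal.coe_le_coe_iff,
    ENNReal.ofReal_le_iff_le_toReal hg, sub_le_iff_le_add']

section Slope

variable {X : Type*} [MetricSpace X]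

theorem gslope_le_ofReal_iff {u : X → ℝ} {x : X} {K : ℝ} (hK : 0 ≤ K) :
    gslope u x ≤ ENNReal.ofReal K ↔ ∀ y, u x - u y ≤ K * dist x y := by
  simp only [gslope, iSup₂_le_iff]
  refine forall_congr' fun y => ?_
  rcases eq_or_ne y x with rfl | hy
  · simp
  have hd : 0 < dist x y := dist_pos.2 hy.symm
  rw [ENNReal.ofReal_le_ofReal_iff hK, div_le_iff₀ hd, imp_iff_right hy]

theorem ofReal_le_gslope_iff {u : X → ℝ} {x : X} {c : ℝ} :
    ENNReal.ofReal c ≤ gslope u x ↔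
      ∀ K, 0 ≤ K → (∀ y, u x - u y ≤ K * dist x y) → c ≤ K := by
  constructor
  · intro h K hK hslope
    exact (ENNReal.ofReal_le_ofReal_iff hK).1 (h.trans ((gslope_le_ofReal_iff hK).2 hslope))
  · intro h
    rcases eq_or_ne (gslope u x) ⊤ with htop | hfin
    · simp [htop]
    rw [ENNReal.ofReal_le_iff_le_toReal hfin]
    exact h _ toReal_nonneg ((gslope_le_ofReal_iff toReal_nonneg).1 (ofReal_toReal hfin).ge)

def IsSubsolution (lam : ℝ) (ℓ u : X → ℝ) : Prop :=
  ∀ x, ((lam * u x : ℝ) : EReal) + (gslope u x : EReal) ≤ (ℓ x : EReal)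

def IsSupersolution (lam : ℝ) (ℓ v : X → ℝ) : Prop :=
  ∀ x, (ℓ x : EReal) ≤ ((lam * v x : ℝ) : EReal) + (gslope v x : EReal)

variable {lam : ℝ} {ℓ u v : X → ℝ}

theorem isSubsolution_iff : IsSubsolution lam ℓ u ↔
    ∀ x, lam * u x ≤ ℓ x ∧ ∀ y, u x - u y ≤ (ℓ x - lam * u x) * dist x y := by
  refine forall_congr' fun x => ?_
  rw [coe_add_ennreal_le_coe_iff]
  exact and_congr_right fun h => gslope_le_ofReal_iff (sub_nonneg.2 h)

theorem isSupersolution_iff : IsSupersolution lam ℓ v ↔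
    ∀ x K, 0 ≤ K → (∀ y, v x - v y ≤ K * dist x y) → ℓ x ≤ lam * v x + K := by
  simp only [IsSupersolution, coe_le_coe_add_ennreal_iff, ofReal_le_gslope_iff,
    sub_le_iff_le_add']

end Slope

section Ekeland

variable {X : Type*} [MetricSpace X] {f : X → ℝ} {δ : ℝ}

def dropSet (f : X → ℝ) (δ : ℝ) (x : X) : Set X := {y | f y + δ * dist x y ≤ f x}

theorem self_mem_dropSet (x : X) : x ∈ dropSet f δ x := by simp [dropSet]

theorem dropSet_subset (hδ : 0 ≤ δ) {x y : X} (hy : y ∈ dropSet f δ x) :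
    dropSet f δ y ⊆ dropSet f δ x := fun z (hz : f z + δ * dist y z ≤ f y) =>
  show f z + δ * dist x z ≤ f x by
    have hy : f y + δ * dist x y ≤ f x := hy
    nlinarith [mul_le_mul_of_nonneg_left (dist_triangle x y z) hδ]

theorem isClosed_dropSet (hf : LowerSemicontinuous f) (x : X) : IsClosed (dropSet f δ x) :=
  (hf.add (continuous_const.mul (continuous_const.dist continuous_id)).lowerSemicontinuous
    ).isClosed_preimage (f x)

theorem exists_mem_dropSet_dist_le (hf : BddBelow (range f)) (hδ : 0 < δ) (x : X) {ε : ℝ}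
    (hε : 0 < ε) : ∃ y ∈ dropSet f δ x, ∀ z ∈ dropSet f δ y, dist y z ≤ ε := by
  have hbdd : BddBelow (f '' dropSet f δ x) := hf.mono (image_subset_range _ _)
  obtain ⟨_, ⟨y, hy, rfl⟩, hlt⟩ := exists_lt_of_csInf_lt
    ((nonempty_of_mem (self_mem_dropSet x)).image f) (lt_add_of_pos_right _ (mul_pos hδ hε))
  refine ⟨y, hy, fun z hz => ?_⟩
  have hfz : sInf (f '' dropSet f δ x) ≤ f z :=
    csInf_le hbdd (mem_image_of_mem f (dropSet_subset hδ.le hy hz))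
  have hz' : f z + δ * dist y z ≤ f y := hz
  nlinarith

/-- Ekeland's variational principle. -/
theorem exists_mem_dropSet_forall_le [CompleteSpace X] (hf : LowerSemicontinuous f)
    (hf' : BddBelow (range f)) (hδ : 0 < δ) (x₁ : X) :
    ∃ x₀ ∈ dropSet f δ x₁, ∀ y, f x₀ ≤ f y + δ * dist x₀ y := by
  choose next hnext_mem hnext using fun (n : ℕ) (x : X) =>
    exists_mem_dropSet_dist_le hf' hδ x (Nat.one_div_pos_of_nat (n := n))
  let seq : ℕ → X := fun n => Nat.rec x₁ next n
  let s : ℕ → Set X := fun n => dropSet f δ (seq (n + 1))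
  have hs_anti : Antitone s := antitone_nat_of_succ_le fun n =>
    dropSet_subset hδ.le (hnext_mem _ _)
  have hs_dist : ∀ n, ∀ y ∈ s n, dist (seq (n + 1)) y ≤ 1 / (n + 1) := fun n => hnext _ _
  have hs_diam : ∀ n, Metric.diam (s n) ≤ 2 * (1 / (n + 1)) := fun n =>
    Metric.diam_le_of_forall_dist_le (by positivity) fun y hy z hz => by
      linarith [dist_triangle_left y z (seq (n + 1)), hs_dist n y hy, hs_dist n z hz]
  have hlim : Tendsto (fun n : ℕ => 2 * (1 / ((n : ℝ) + 1))) atTop (𝓝 0) := by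
    simpa using tendsto_one_div_add_atTop_nhds_zero_nat.const_mul (2 : ℝ)
  have hs_bdd : ∀ n, Bornology.IsBounded (s n) := fun n =>
    Metric.isBounded_closedBall.subset fun y hy => by
      rw [Metric.mem_closedBall, dist_comm]; exact hs_dist n y hy
  obtain ⟨x₀, hx₀⟩ := Metric.nonempty_iInter_of_nonempty_biInter
    (fun n => isClosed_dropSet hf _) hs_bdd
    (fun N => ⟨seq (N + 1), mem_iInter₂.2 fun n hn => hs_anti hn (self_mem_dropSet _)⟩)
    (squeeze_zero (fun n => Metric.diam_nonneg) hs_diam hlim)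
  rw [mem_iInter] at hx₀
  refine ⟨x₀, dropSet_subset hδ.le (hnext_mem 0 x₁) (hx₀ 0), fun y => ?_⟩
  by_contra! hy
  have hy_mem : ∀ n, y ∈ s n := fun n =>
    dropSet_subset hδ.le (hx₀ n) (show f y + δ * dist x₀ y ≤ f x₀ from hy.le)
  have hdist : dist x₀ y ≤ 0 := ge_of_tendsto' hlim fun n =>
    (Metric.dist_le_diam_of_mem (hs_bdd n) (hx₀ n) (hy_mem n)).trans (hs_diam n)
  rw [dist_le_zero.1 hdist, dist_self, mul_zero, add_zero] at hy
  exact lt_irrefl _ hy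

end Ekeland

section Comparison

variable {X : Type*} [MetricSpace X] {lam : ℝ} {ℓ u v : X → ℝ}

theorem IsSubsolution.mul_le (hu : IsSubsolution lam ℓ u) (x : X) : lam * u x ≤ ℓ x :=
  (isSubsolution_iff.1 hu x).1

theorem IsSubsolution.sub_le (hu : IsSubsolution lam ℓ u) (x y : X) :
    u x - u y ≤ (ℓ x - lam * u x) * dist x y :=
  (isSubsolution_iff.1 hu x).2 y

theorem IsSubsolution.le_div (hlam : 0 < lam) (hu : IsSubsolution lam ℓ u) (x : X) :
    u x ≤ ℓ x / lam := by
  rw [le_div_iff₀ hlam, mul_comm]; exact hu.mul_le x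

theorem IsSubsolution.bddAbove (hlam : 0 < lam) (hℓ : BddAbove (range ℓ))
    (hu : IsSubsolution lam ℓ u) : BddAbove (range u) := by
  obtain ⟨M, hM⟩ := hℓ
  refine ⟨M / lam, forall_mem_range.2 fun x => (hu.le_div hlam x).trans ?_⟩
  gcongr
  exact hM (mem_range_self x)

theorem IsSubsolution.lipschitzWith (hlam : 0 ≤ lam) (hu : IsSubsolution lam ℓ u) {M m : ℝ}
    (hℓ : ∀ x, ℓ x ≤ M) (hm : ∀ x, m ≤ u x) : LipschitzWith (M - lam * m).toNNReal u := by
  refine LipschitzWith.of_le_add_mul _ fun x y => ?_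
  have hslope : ℓ x - lam * u x ≤ (M - lam * m).toNNReal := by
    nlinarith [hℓ x, hm x, Real.le_coe_toNNReal (M - lam * m)]
  nlinarith [hu.sub_le x y, mul_le_mul_of_nonneg_right hslope (dist_nonneg (x := x) (y := y))]

theorem IsSubsolution.continuous (hlam : 0 ≤ lam) (hℓ : BddAbove (range ℓ))
    (hu : IsSubsolution lam ℓ u) (hu' : BddBelow (range u)) : Continuous u := by
  obtain ⟨M, hM⟩ := hℓ
  obtain ⟨m, hm⟩ := hu'
  exact (hu.lipschitzWith hlam (fun x => hM (mem_range_self x))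
    fun x => hm (mem_range_self x)).continuous

/-- At a point where `v - u` is `δ`-almost minimal, `v` inherits from `u` the slope bound
`ℓ - λ u + δ`. -/
theorem IsSupersolution.mul_sub_le_of_forall_le (hu : IsSubsolution lam ℓ u)
    (hv : IsSupersolution lam ℓ v) {δ : ℝ} (hδ : 0 ≤ δ) {x₀ : X}
    (hx₀ : ∀ y, v x₀ - u x₀ ≤ v y - u y + δ * dist x₀ y) : lam * (u x₀ - v x₀) ≤ δ := by
  have hslope : ∀ y, v x₀ - v y ≤ (ℓ x₀ - lam * u x₀ + δ) * dist x₀ y := fun y => by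
    nlinarith [hx₀ y, hu.sub_le x₀ y]
  have := isSupersolution_iff.1 hv x₀ _ (by linarith [hu.mul_le x₀]) hslope
  linarith

theorem IsSubsolution.le_of_isSupersolution [CompleteSpace X] (hlam : 0 < lam)
    (hℓ : BddAbove (range ℓ)) (hu : IsSubsolution lam ℓ u) (hu' : BddBelow (range u))
    (hv : IsSupersolution lam ℓ v) (hv_lsc : LowerSemicontinuous v) (hv' : BddBelow (range v)) :
    u ≤ v := by
  have hf : LowerSemicontinuous (v - u) :=
    hv_lsc.add (hu.continuous hlam.le hℓ hu').neg.lowerSemicontinuous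
  have hf' : BddBelow (range (v - u)) := by
    obtain ⟨a, ha⟩ := hv'
    obtain ⟨b, hb⟩ := hu.bddAbove hlam hℓ
    exact ⟨a - b, forall_mem_range.2 fun x =>
      sub_le_sub (ha (mem_range_self x)) (hb (mem_range_self x))⟩
  intro x₁
  refine le_of_forall_pos_le_add fun ε hε => ?_
  obtain ⟨x₀, hx₀, hmin⟩ := exists_mem_dropSet_forall_le hf hf' (mul_pos hlam hε) x₁
  have hdrop : v x₀ - u x₀ + lam * ε * dist x₁ x₀ ≤ v x₁ - u x₁ := hx₀
  have hx₀ε : u x₀ - v x₀ ≤ ε :=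
    le_of_mul_le_mul_left (hv.mul_sub_le_of_forall_le hu (mul_pos hlam hε).le hmin) hlam
  have : 0 ≤ lam * ε * dist x₁ x₀ := by positivity
  linarith

end Comparison

section Perron

variable {X : Type*} [MetricSpace X] {lam : ℝ} {ℓ u w : X → ℝ}

theorem isSubsolution_zero (hℓ0 : 0 ≤ ℓ) : IsSubsolution lam ℓ 0 :=
  isSubsolution_iff.2 fun x =>
    ⟨by simpa using hℓ0 x, fun y => by simpa using mul_nonneg (hℓ0 x) dist_nonneg⟩

theorem IsSubsolution.max_of_forall_lt (hu : IsSubsolution lam ℓ u) {ψ : X → ℝ}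
    (hψ : ∀ x, u x < ψ x → lam * ψ x ≤ ℓ x ∧ ∀ y, ψ x - ψ y ≤ (ℓ x - lam * ψ x) * dist x y) :
    IsSubsolution lam ℓ fun x => max (u x) (ψ x) := by
  refine isSubsolution_iff.2 fun x => ?_
  rcases le_or_gt (ψ x) (u x) with h | h
  · rw [max_eq_left h]
    exact ⟨hu.mul_le x, fun y => (sub_le_sub_left (le_max_left _ _) _).trans (hu.sub_le x y)⟩
  · rw [max_eq_right h.le]
    exact ⟨(hψ x h).1, fun y => (sub_le_sub_left (le_max_right _ _) _).trans ((hψ x h).2 y)⟩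

/-- If the subsolution `w` violates the supersolution inequality at `x₀` with slope `K`, then
raising `w` by a cone of apex `w x₀ + δ` and slope `K + θ` only changes it inside a small ball
around `x₀`, where lower semicontinuity of `ℓ` keeps the subsolution inequality. -/
theorem IsSubsolution.exists_gt (hlam : 0 < lam) (hℓ : LowerSemicontinuous ℓ)
    (hw : IsSubsolution lam ℓ w) {x₀ : X} {K : ℝ} (hK : 0 ≤ K)
    (hslope : ∀ y, w x₀ - w y ≤ K * dist x₀ y) (hlt : lam * w x₀ + K < ℓ x₀) :
    ∃ u, IsSubsolution lam ℓ u ∧ w x₀ < u x₀ := by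
  set θ := (ℓ x₀ - lam * w x₀ - K) / 2 with hθ_def
  have hθ : 0 < θ := by linarith
  obtain ⟨ρ, hρ, hℓρ⟩ := Metric.eventually_nhds_iff.1 (hℓ x₀ (ℓ x₀ - θ / 2) (by linarith))
  obtain ⟨δ, hδ, hδlam, hδρ⟩ : ∃ δ > 0, lam * δ ≤ θ / 2 ∧ δ < θ * ρ := by
    refine ⟨min (θ / (2 * lam)) (θ * ρ / 2), by positivity, ?_, ?_⟩
    · calc lam * min (θ / (2 * lam)) (θ * ρ / 2) ≤ lam * (θ / (2 * lam)) := by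
            gcongr; exact min_le_left _ _
        _ = θ / 2 := by field_simp
    · exact (min_le_right _ _).trans_lt (by linarith [mul_pos hθ hρ])
  let ψ : X → ℝ := fun y => w x₀ + δ - (K + θ) * dist x₀ y
  refine ⟨fun x => max (w x) (ψ x), hw.max_of_forall_lt fun x hx => ?_,
    lt_max_of_lt_right (by simpa [ψ])⟩
  have hψx : ψ x = w x₀ + δ - (K + θ) * dist x₀ x := rfl
  have hnear : θ * dist x₀ x < θ * ρ := by linarith [hslope x]
  have hℓx : ℓ x₀ - θ / 2 < ℓ x := hℓρ (by rw [dist_comm]; exact lt_of_mul_lt_mul_left hnear hθ.le)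
  have hlamψ : lam * ψ x ≤ lam * w x₀ + θ / 2 := by
    have : ψ x ≤ w x₀ + δ := by nlinarith [dist_nonneg (x := x₀) (y := x)]
    nlinarith
  have hKθ : K + θ ≤ ℓ x - lam * ψ x := by linarith
  refine ⟨by linarith, fun y => ?_⟩
  calc ψ x - ψ y = (K + θ) * (dist x₀ y - dist x₀ x) := by ring
    _ ≤ (K + θ) * dist x y := by gcongr; linarith [dist_triangle x₀ x y]
    _ ≤ (ℓ x - lam * ψ x) * dist x y := mul_le_mul_of_nonneg_right hKθ dist_nonneg

theorem IsSubsolution.isSupersolution_of_forall_le (hlam : 0 < lam) (hℓ : LowerSemicontinuous ℓ)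
    (hw : IsSubsolution lam ℓ w) (hmax : ∀ u, IsSubsolution lam ℓ u → u ≤ w) :
    IsSupersolution lam ℓ w :=
  isSupersolution_iff.2 fun x₀ _ hK hslope => by
    by_contra! hlt
    obtain ⟨u, hu, hgt⟩ := hw.exists_gt hlam hℓ hK hslope hlt
    exact (hgt.trans_le (hmax u hu x₀)).false

noncomputable def perronSolution (lam : ℝ) (ℓ : X → ℝ) (x : X) : ℝ :=
  ⨆ u : {u : X → ℝ // IsSubsolution lam ℓ u}, u.1 x

theorem le_perronSolution (hlam : 0 < lam) (hu : IsSubsolution lam ℓ u) :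
    u ≤ perronSolution lam ℓ := fun x =>
  le_ciSup (f := fun u : {u : X → ℝ // IsSubsolution lam ℓ u} => u.1 x)
    ⟨ℓ x / lam, forall_mem_range.2 fun u => u.2.le_div hlam x⟩ ⟨u, hu⟩

theorem perronSolution_nonneg (hlam : 0 < lam) (hℓ0 : 0 ≤ ℓ) : 0 ≤ perronSolution lam ℓ :=
  le_perronSolution hlam (isSubsolution_zero hℓ0)

theorem isSubsolution_perronSolution (hlam : 0 < lam) (hℓ0 : 0 ≤ ℓ) :
    IsSubsolution lam ℓ (perronSolution lam ℓ) := by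
  have : Nonempty {u : X → ℝ // IsSubsolution lam ℓ u} := ⟨⟨0, isSubsolution_zero hℓ0⟩⟩
  refine isSubsolution_iff.2 fun x => ⟨?_, fun y => ?_⟩
  · have : perronSolution lam ℓ x ≤ ℓ x / lam := ciSup_le fun u => u.2.le_div hlam x
    rwa [le_div_iff₀ hlam, mul_comm] at this
  · have hd : 0 < 1 + lam * dist x y := by positivity
    -- `u x - w y ≤ u x - u y` turns the slope bound of each `u` into an upper bound on `u x`
    have : perronSolution lam ℓ x ≤
        (perronSolution lam ℓ y + ℓ x * dist x y) / (1 + lam * dist x y) :=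
      ciSup_le fun u => by
        rw [le_div_iff₀ hd]
        nlinarith [u.2.sub_le x y, le_perronSolution hlam u.2 y]
    rw [le_div_iff₀ hd] at this
    linarith

theorem isSupersolution_perronSolution (hlam : 0 < lam) (hℓ : LowerSemicontinuous ℓ)
    (hℓ0 : 0 ≤ ℓ) : IsSupersolution lam ℓ (perronSolution lam ℓ) :=
  (isSubsolution_perronSolution hlam hℓ0).isSupersolution_of_forall_le hlam hℓ
    fun _ hu => le_perronSolution hlam hu

theorem IsSubsolution.iInf_eq_zero (hlam : 0 < lam) (hu : IsSubsolution lam ℓ u) (hu0 : 0 ≤ u)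
    (hℓ : ⨅ x, ℓ x = 0) : ⨅ x, u x = 0 := by
  refine le_antisymm ?_ (Real.iInf_nonneg hu0)
  calc ⨅ x, u x ≤ ⨅ x, ℓ x * lam⁻¹ :=
        ciInf_mono ⟨0, forall_mem_range.2 hu0⟩ fun x =>
          (hu.le_div hlam x).trans_eq (div_eq_mul_inv _ _)
    _ = 0 := by rw [← Real.iInf_mul_of_nonneg (inv_nonneg.2 hlam.le), hℓ, zero_mul]

end Perron

theorem comparison_principle_complete_and_uniqueness_general {X : Type*} [MetricSpace X]
    [CompleteSpace X]
    (lam : ℝ) (hlam : 0 < lam)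
    (ℓ : X → ℝ) (hℓ : LowerSemicontinuous ℓ) (hℓ0 : ∀ x, 0 ≤ ℓ x)
    (hℓb : ∃ M : ℝ, ∀ x, ℓ x ≤ M) (hinfℓ : ⨅ x, ℓ x = 0)
    (u v : X → ℝ) (hv : LowerSemicontinuous v)
    (hub : ∃ M : ℝ, ∀ x, |u x| ≤ M) (hvb : ∃ M : ℝ, ∀ x, |v x| ≤ M)
    (hsub : ∀ x, ((lam * u x : ℝ) : EReal) + (gslope u x : EReal) ≤ (ℓ x : EReal))
    (hsup : ∀ x, (ℓ x : EReal) ≤ ((lam * v x : ℝ) : EReal) + (gslope v x : EReal)) :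
    (∀ x, u x ≤ v x) ∧
    ∃! w : X → ℝ, (∃ M : ℝ, ∀ x, |w x| ≤ M) ∧ (∃ K : NNReal, LipschitzWith K w) ∧
      (⨅ x, w x = 0) ∧
      ∀ x, ((lam * w x : ℝ) : EReal) + (gslope w x : EReal) = (ℓ x : EReal) := by
  have bddBelow_of_abs_le (f : X → ℝ) : (∃ M, ∀ x, |f x| ≤ M) → BddBelow (range f) :=
    fun ⟨M, hM⟩ => ⟨-M, forall_mem_range.2 fun x => neg_le_of_abs_le (hM x)⟩
  obtain ⟨M, hM⟩ := hℓb
  have hℓ' : BddAbove (range ℓ) := ⟨M, forall_mem_range.2 hM⟩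
  have hw_sub := isSubsolution_perronSolution hlam hℓ0
  have hw_sup := isSupersolution_perronSolution hlam hℓ hℓ0
  have hw0 := perronSolution_nonneg hlam hℓ0
  have hw_lip := hw_sub.lipschitzWith hlam.le hM hw0
  have hw_abs (x : X) : |perronSolution lam ℓ x| ≤ M / lam := by
    rw [abs_of_nonneg (hw0 x)]
    exact (hw_sub.le_div hlam x).trans (div_le_div_of_nonneg_right (hM x) hlam.le)
  refine ⟨IsSubsolution.le_of_isSupersolution hlam hℓ' hsub (bddBelow_of_abs_le u hub) hsup hv
      (bddBelow_of_abs_le v hvb), perronSolution lam ℓ,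
    ⟨⟨M / lam, hw_abs⟩, ⟨_, hw_lip⟩, hw_sub.iInf_eq_zero hlam hw0 hinfℓ,
      fun x => (hw_sub x).antisymm (hw_sup x)⟩, ?_⟩
  rintro w ⟨hwb, ⟨K, hw_lip'⟩, -, hw⟩
  have hw_sub' : IsSubsolution lam ℓ w := fun x => (hw x).le
  have hw_sup' : IsSupersolution lam ℓ w := fun x => (hw x).ge
  exact le_antisymm
    (hw_sub'.le_of_isSupersolution hlam hℓ' (bddBelow_of_abs_le w hwb) hw_sup
      hw_lip.continuous.lowerSemicontinuous ⟨0, forall_mem_range.2 hw0⟩)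
    (hw_sub.le_of_isSupersolution hlam hℓ' ⟨0, forall_mem_range.2 hw0⟩ hw_sup'
      hw_lip'.continuous.lowerSemicontinuous (bddBelow_of_abs_le w hwb))

/-- Comparison principle (complete case) and uniqueness: on a complete metric space with
λ > 0 and ℓ bounded lsc, `inf ℓ = 0`, every bounded lsc subsolution lies below every bounded
lsc supersolution; in particular the equation `λ w + G[w] = ℓ`, `inf w = 0` has a unique
bounded Lipschitz solution. -/
theorem comparison_principle_complete_and_uniqueness {X : Type*} [MetricSpace X]
    [CompleteSpace X] [Nonempty X]
    (lam : ℝ) (hlam : 0 < lam)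
    (ℓ : X → ℝ) (hℓ : LowerSemicontinuous ℓ) (hℓ0 : ∀ x, 0 ≤ ℓ x)
    (hℓb : ∃ M : ℝ, ∀ x, ℓ x ≤ M) (hinfℓ : ⨅ x, ℓ x = 0)
    (u v : X → ℝ) (hu : LowerSemicontinuous u) (hv : LowerSemicontinuous v)
    (hub : ∃ M : ℝ, ∀ x, |u x| ≤ M) (hvb : ∃ M : ℝ, ∀ x, |v x| ≤ M)
    (hinfu : ⨅ x, u x = 0) (hinfv : ⨅ x, v x = 0)
    (hsub : ∀ x, ((lam * u x : ℝ) : EReal) + (gslope u x : EReal) ≤ (ℓ x : EReal))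
    (hsup : ∀ x, (ℓ x : EReal) ≤ ((lam * v x : ℝ) : EReal) + (gslope v x : EReal)) :
    (∀ x, u x ≤ v x) ∧
    ∃! w : X → ℝ, (∃ M : ℝ, ∀ x, |w x| ≤ M) ∧ (∃ K : NNReal, LipschitzWith K w) ∧
      (⨅ x, w x = 0) ∧
      ∀ x, ((lam * w x : ℝ) : EReal) + (gslope w x : EReal) = (ℓ x : EReal) :=
  comparison_principle_complete_and_uniqueness_general lam hlam ℓ hℓ hℓ0 hℓb hinfℓ u v hv hub hvb
    hsub hsup
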